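/- Let n ≥ 1 have binary expansion n = Σ_{l=1}^s 2^{k_l} with 0 ≤ k_1 < k_2 < … < k_s. Then the Walsh–Dirichlet kernels satisfy D_n = w_n · Σ_{i ∈ {k_1,…,k_s}} (D_{2^{i+1}} − D_{2^i}). -/

import Mathlib

/-!
Each Rademacher function squares to one, so `w_a w_b = w_{a xor b}`. For `j < 2^a` this gives
`w_{2^a + j} = r_{a+1} w_j`, hence `D_{2^a + j} = D_{2^a} + r_{a+1} D_j`, and, since `xor j`
permutes `[0, 2^a)`, also `w_j D_{2^a} = D_{2^a}`. Writing `n = 2^a + n'` with `a` the top bit,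
these three identities and `r_{a+1}² = 1` reduce the claim for `n` to the claim for `n'`.
-/

open MeasureTheory
open scoped ENNReal

noncomputable section

/-- The Rademacher function `r_{i+1}` of the paper: `r_1(t) = 1` on `[0,1/2) + ℤ`,
`-1` on `[1/2,1) + ℤ`, and `r_{i+1}(t) = r_1(2^i t)`. -/
def rademacher (i : ℕ) (t : ℝ) : ℝ :=
  if Int.fract (2 ^ i * t) < 1 / 2 then 1 else -1

/-- The `n`-th Walsh function `w_n = ∏_i r_{i+1}^{n_i}` where `n = ∑_i n_i 2^i`. -/
def walsh (n : ℕ) (t : ℝ) : ℝ :=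
  ∏ i ∈ Finset.range n, if n.testBit i then rademacher i t else 1

/-- Lebesgue measure on `[0,1]`. -/
def unitI : Measure ℝ := volume.restrict (Set.Icc 0 1)

/-- `f ∈ L_2^X`: `f : [0,1] → X` is (Bochner) measurable with `∫_0^1 ‖f(t)‖² dt < ∞`. -/
def MemL2 {X : Type*} [NormedAddCommGroup X] (f : ℝ → X) : Prop := MemLp f 2 unitI

/-- `‖f‖_2 = (∫_0^1 ‖f(t)‖² dt)^{1/2}`. -/
def l2norm {X : Type*} [NormedAddCommGroup X] (f : ℝ → X) : ℝ :=
  Real.sqrt (∫ t, ‖f t‖ ^ 2 ∂unitI)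

/-- The Walsh–Fourier coefficient `⟨f, w_i⟩ = ∫_0^1 f(t) w_i(t) dt`. -/
def walshCoeff {X : Type*} [NormedAddCommGroup X] [NormedSpace ℝ X] (f : ℝ → X) (i : ℕ) : X :=
  ∫ t, walsh i t • f t ∂unitI

/-- The `n`-th Walsh partial sum `S_n(f) = ∑_{i<n} ⟨f,w_i⟩ w_i`. -/
def walshSum {X : Type*} [NormedAddCommGroup X] [NormedSpace ℝ X] (n : ℕ) (f : ℝ → X) :
    ℝ → X :=
  fun t => ∑ i ∈ Finset.range n, walsh i t • walshCoeff f i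

/-- The `n`-th Walsh–Dirichlet kernel `D_n = ∑_{i<n} w_i`. -/
def dirichlet (n : ℕ) (t : ℝ) : ℝ := ∑ i ∈ Finset.range n, walsh i t

lemma rademacher_mul_self (i : ℕ) (t : ℝ) : rademacher i t * rademacher i t = 1 := by
  unfold rademacher; split <;> norm_num

lemma walsh_eq_prod_range {n N : ℕ} (h : n < 2 ^ N) (t : ℝ) :
    walsh n t = ∏ i ∈ Finset.range N, if n.testBit i then rademacher i t else 1 := by
  have prod_eq_of_le {M₁ M₂ : ℕ} (hM : M₁ ≤ M₂) (hn : n < 2 ^ M₁) :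
      (∏ i ∈ Finset.range M₂, if n.testBit i then rademacher i t else 1) =
        ∏ i ∈ Finset.range M₁, if n.testBit i then rademacher i t else 1 := by
    refine (Finset.prod_subset (Finset.range_subset_range.mpr hM) fun i _ hi => ?_).symm
    rw [Finset.mem_range, not_lt] at hi
    rw [Nat.testBit_lt_two_pow (hn.trans_le (Nat.pow_le_pow_right two_pos hi)),
      if_neg Bool.false_ne_true]
  rcases le_total n N with hle | hle
  · exact (prod_eq_of_le hle Nat.lt_two_pow_self).symm
  · exact prod_eq_of_le hle h

lemma walsh_mul_walsh (a b : ℕ) (t : ℝ) : walsh a t * walsh b t = walsh (a ^^^ b) t := by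
  have ha : a < 2 ^ (a + b) :=
    Nat.lt_two_pow_self.trans_le (Nat.pow_le_pow_right two_pos (Nat.le_add_right a b))
  have hb : b < 2 ^ (a + b) :=
    Nat.lt_two_pow_self.trans_le (Nat.pow_le_pow_right two_pos (Nat.le_add_left b a))
  rw [walsh_eq_prod_range ha, walsh_eq_prod_range hb,
    walsh_eq_prod_range (Nat.xor_lt_two_pow ha hb), ← Finset.prod_mul_distrib]
  refine Finset.prod_congr rfl fun i _ => ?_
  rw [Nat.testBit_xor]
  cases a.testBit i <;> cases b.testBit i <;> simp [rademacher_mul_self]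

lemma walsh_two_pow (a : ℕ) (t : ℝ) : walsh (2 ^ a) t = rademacher a t := by
  rw [walsh_eq_prod_range (Nat.pow_lt_pow_succ one_lt_two), Finset.prod_eq_single_of_mem a
    (Finset.self_mem_range_succ a) fun i _ hia => by simp [Ne.symm hia]]
  simp

lemma two_pow_add_eq_xor {a j : ℕ} (h : j < 2 ^ a) : 2 ^ a + j = 2 ^ a ^^^ j := by
  refine Nat.eq_of_testBit_eq fun i => ?_
  have := Nat.testBit_two_pow_mul_add 1 h i
  rw [mul_one] at this
  rw [this, Nat.testBit_xor, Nat.testBit_two_pow]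
  split_ifs with hi
  · simp [hi.ne']
  · rw [Nat.testBit_lt_two_pow (h.trans_le (Nat.pow_le_pow_right two_pos (not_lt.mp hi))),
      Bool.xor_false, Bool.eq_iff_iff]
    simp only [Nat.testBit_one_eq_true_iff_self_eq_zero, decide_eq_true_iff]
    omega

lemma walsh_two_pow_add {a j : ℕ} (h : j < 2 ^ a) (t : ℝ) :
    walsh (2 ^ a + j) t = rademacher a t * walsh j t := by
  rw [two_pow_add_eq_xor h, ← walsh_mul_walsh, walsh_two_pow]

lemma dirichlet_two_pow_add {a j : ℕ} (h : j ≤ 2 ^ a) (t : ℝ) :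
    dirichlet (2 ^ a + j) t = dirichlet (2 ^ a) t + rademacher a t * dirichlet j t := by
  rw [dirichlet, Finset.sum_range_add, dirichlet, dirichlet, Finset.mul_sum]
  congr 1
  exact Finset.sum_congr rfl fun i hi => walsh_two_pow_add ((Finset.mem_range.mp hi).trans_le h) t

lemma dirichlet_two_pow_succ_sub (a : ℕ) (t : ℝ) :
    dirichlet (2 ^ (a + 1)) t - dirichlet (2 ^ a) t = rademacher a t * dirichlet (2 ^ a) t := by
  rw [pow_succ, mul_two, dirichlet_two_pow_add le_rfl, add_sub_cancel_left]

lemma walsh_mul_dirichlet_two_pow {a j : ℕ} (h : j < 2 ^ a) (t : ℝ) :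
    walsh j t * dirichlet (2 ^ a) t = dirichlet (2 ^ a) t := by
  have mem {i : ℕ} (hi : i ∈ Finset.range (2 ^ a)) : j ^^^ i ∈ Finset.range (2 ^ a) :=
    Finset.mem_range.mpr (Nat.xor_lt_two_pow h (Finset.mem_range.mp hi))
  rw [dirichlet, Finset.mul_sum]
  simp_rw [walsh_mul_walsh]
  exact Finset.sum_nbij' (j ^^^ ·) (j ^^^ ·) (fun _ => mem) (fun _ => mem) (by simp) (by simp)
    fun _ _ => rfl

lemma dirichlet_sum_two_pow (K : Finset ℕ) (t : ℝ) :
    dirichlet (∑ i ∈ K, 2 ^ i) t =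
      walsh (∑ i ∈ K, 2 ^ i) t *
        ∑ i ∈ K, (dirichlet (2 ^ (i + 1)) t - dirichlet (2 ^ i) t) := by
  induction K using Finset.induction_on_max with
  | empty => simp [dirichlet]
  | insert a s ha ih =>
    set n' := ∑ i ∈ s, 2 ^ i
    have ha' : a ∉ s := fun h => (ha a h).false
    have hlt : n' < 2 ^ a := Nat.geomSum_lt le_rfl ha
    rw [Finset.sum_insert ha', Finset.sum_insert ha', dirichlet_two_pow_add hlt.le,
      walsh_two_pow_add hlt, dirichlet_two_pow_succ_sub, ih]
    linear_combination -(walsh n' t * dirichlet (2 ^ a) t) * rademacher_mul_self a t -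
      walsh_mul_dirichlet_two_pow hlt t

theorem dirichlet_eq_walsh_mul_sum_general (n : ℕ) (K : Finset ℕ)
    (hn : n = ∑ i ∈ K, 2 ^ i) (t : ℝ) :
    dirichlet n t =
      walsh n t * ∑ i ∈ K, (dirichlet (2 ^ (i + 1)) t - dirichlet (2 ^ i) t) := by
  rw [hn, dirichlet_sum_two_pow]

/-- **Lemma (Paley).** If `n = ∑_{l=1}^s 2^{k_l}` with `0 ≤ k_1 < ⋯ < k_s`
(equivalently, `n = ∑_{i ∈ K} 2^i` for a nonempty finite set `K ⊆ ℕ`), then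
`D_n = w_n ∑_{i ∈ K} (D_{2^{i+1}} - D_{2^i})`. -/
theorem dirichlet_eq_walsh_mul_sum (n : ℕ) (K : Finset ℕ) (hK : K.Nonempty)
    (hn : n = ∑ i ∈ K, 2 ^ i) (t : ℝ) :
    dirichlet n t =
      walsh n t * ∑ i ∈ K, (dirichlet (2 ^ (i + 1)) t - dirichlet (2 ^ i) t) :=
  dirichlet_eq_walsh_mul_sum_general n K hn t

end
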